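/- (Asymptotic last-iterate convergence of OOMD.) Suppose ψ is 1-strongly convex with respect to the 2-norm and continuously differentiable on the entire domain Z, and η ≤ 1/(8P). Then the OOMD iterates z_t converge, as t → ∞, to some point z_∞ that is a Nash equilibrium (z_∞ ∈ Z*). -/

import Mathlib

open Finset Filter Topology

noncomputable section

/-- Squared Euclidean norm on `ℝ^n`. -/
def sqnorm {n : ℕ} (z : Fin n → ℝ) : ℝ := ∑ i, (z i) ^ 2

/-- Euclidean (2-)norm on `ℝ^n`. -/
def norm2 {n : ℕ} (z : Fin n → ℝ) : ℝ := Real.sqrt (sqnorm z)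

/-- 1-norm on `ℝ^n`. -/
def norm1 {n : ℕ} (z : Fin n → ℝ) : ℝ := ∑ i, |z i|

/-- Dot product on `ℝ^n`. -/
def dotp {n : ℕ} (a b : Fin n → ℝ) : ℝ := ∑ i, a i * b i

/-- Treeplexes (Hoda et al.): probability simplexes, Cartesian products, and branching. -/
inductive IsTreeplex : {n : ℕ} → Set (Fin n → ℝ) → Prop
  | simplex (m : ℕ) :
      IsTreeplex {x : Fin (m + 1) → ℝ | (∀ i, 0 ≤ x i) ∧ (∑ i, x i) = 1}
  | prod {m k : ℕ} {S : Set (Fin m → ℝ)} {T : Set (Fin k → ℝ)} :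
      IsTreeplex S → IsTreeplex T →
      IsTreeplex {z : Fin (m + k) → ℝ | ∃ u ∈ S, ∃ v ∈ T, z = Fin.append u v}
  | branch {m k : ℕ} {S : Set (Fin m → ℝ)} {T : Set (Fin k → ℝ)} (i : Fin m) :
      IsTreeplex S → IsTreeplex T →
      IsTreeplex {z : Fin (m + k) → ℝ | ∃ u ∈ S, ∃ v ∈ T,
        z = Fin.append u (fun j => u i * v j)}

/-- A point `z = (x, y)` of the product space `ℝ^M × ℝ^N`. -/
abbrev Pt (M N : ℕ) := (Fin M → ℝ) × (Fin N → ℝ)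

def dotPt {M N : ℕ} (a b : Pt M N) : ℝ := dotp a.1 b.1 + dotp a.2 b.2

def sqnormPt {M N : ℕ} (z : Pt M N) : ℝ := sqnorm z.1 + sqnorm z.2

def norm2Pt {M N : ℕ} (z : Pt M N) : ℝ := Real.sqrt (sqnormPt z)

def norm1Pt {M N : ℕ} (z : Pt M N) : ℝ := norm1 z.1 + norm1 z.2

/-- The game operator `F(z) = (G y, -Gᵀ x)`. -/
def Fop {M N : ℕ} (G : Matrix (Fin M) (Fin N) ℝ) (z : Pt M N) : Pt M N :=
  (G.mulVec z.2, -(G.transpose.mulVec z.1))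

/-- Bregman divergence of `ψ` (via the Fréchet derivative). -/
def Dbreg {M N : ℕ} (ψ : Pt M N → ℝ) (u v : Pt M N) : ℝ :=
  ψ u - ψ v - fderiv ℝ ψ v (u - v)

/-- Bregman divergence on a single space. -/
def Dbreg1 {n : ℕ} (ψ : (Fin n → ℝ) → ℝ) (u v : Fin n → ℝ) : ℝ :=
  ψ u - ψ v - fderiv ℝ ψ v (u - v)

/-- Optimistic online mirror descent with Bregman-divergence function `D`,
step size `η`, iterates `z` and `zh` (the latter is `ẑ`), started from an
arbitrary `ẑ₁ = z₀ ∈ Z`. -/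
def IsOOMD {M N : ℕ} (G : Matrix (Fin M) (Fin N) ℝ) (Z : Set (Pt M N))
    (D : Pt M N → Pt M N → ℝ) (η : ℝ) (z zh : ℕ → Pt M N) : Prop :=
  z 0 ∈ Z ∧ zh 1 = z 0 ∧
  (∀ t : ℕ, 1 ≤ t → z t ∈ Z ∧
    ∀ w ∈ Z, η * dotPt (z t) (Fop G (z (t - 1))) + D (z t) (zh t) ≤
      η * dotPt w (Fop G (z (t - 1))) + D w (zh t)) ∧
  (∀ t : ℕ, 1 ≤ t → zh (t + 1) ∈ Z ∧
    ∀ w ∈ Z, η * dotPt (zh (t + 1)) (Fop G (z t)) + D (zh (t + 1)) (zh t) ≤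
      η * dotPt w (Fop G (z t)) + D w (zh t))

def maxPayoff {M N : ℕ} (G : Matrix (Fin M) (Fin N) ℝ) (Y : Set (Fin N → ℝ))
    (x : Fin M → ℝ) : ℝ :=
  sSup ((fun y => dotp x (G.mulVec y)) '' Y)

def minPayoff {M N : ℕ} (G : Matrix (Fin M) (Fin N) ℝ) (X : Set (Fin M → ℝ))
    (y : Fin N → ℝ) : ℝ :=
  sInf ((fun x => dotp x (G.mulVec y)) '' X)

/-- `X* = argmin_{x ∈ X} max_{y ∈ Y} xᵀGy`. -/
def Xstar {M N : ℕ} (G : Matrix (Fin M) (Fin N) ℝ) (X : Set (Fin M → ℝ))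
    (Y : Set (Fin N → ℝ)) : Set (Fin M → ℝ) :=
  {x ∈ X | ∀ x' ∈ X, maxPayoff G Y x ≤ maxPayoff G Y x'}

/-- `Y* = argmax_{y ∈ Y} min_{x ∈ X} xᵀGy`. -/
def Ystar {M N : ℕ} (G : Matrix (Fin M) (Fin N) ℝ) (X : Set (Fin M → ℝ))
    (Y : Set (Fin N → ℝ)) : Set (Fin N → ℝ) :=
  {y ∈ Y | ∀ y' ∈ Y, minPayoff G X y' ≤ minPayoff G X y}

/-- The set of Nash equilibria `Z* = X* × Y*`. -/
def NashSet {M N : ℕ} (G : Matrix (Fin M) (Fin N) ℝ) (X : Set (Fin M → ℝ))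
    (Y : Set (Fin N → ℝ)) : Set (Pt M N) :=
  (Xstar G X Y) ×ˢ (Ystar G X Y)

/-- Generalized KL divergence (Bregman divergence of the vanilla entropy),
with the convention `0 ln 0 = 0`. -/
def KLgen {n : ℕ} (u v : Fin n → ℝ) : ℝ :=
  ∑ i, (u i * Real.log (u i / v i) - u i + v i)

def KLgenPt {M N : ℕ} (u v : Pt M N) : ℝ := KLgen u.1 v.1 + KLgen u.2 v.2

/-- The combinatorial structure of a treeplex in sequence form: indices `Fin n`,
information sets `Fin K`, the information set `owner i = h(i)` of each index,
and the parent index `parent h = σ(h)` of each information set (`none` for the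
root convention `z_{σ(h)} = 1`), with an acyclicity witness. -/
structure TreeplexData (n K : ℕ) where
  owner : Fin n → Fin K
  parent : Fin K → Option (Fin n)
  rank : Fin K → ℕ
  parent_rank : ∀ (h : Fin K) (j : Fin n), parent h = some j → rank (owner j) < rank h

/-- `z_{σ(h)}`, with the convention that it is `1` when `h` has no parent. -/
def TreeplexData.parentVal {n K : ℕ} (T : TreeplexData n K) (z : Fin n → ℝ) (h : Fin K) : ℝ :=
  (T.parent h).elim 1 z

/-- The treeplex determined by `T`: `z ≥ 0` with `∑_{i ∈ Ω_h} z_i = z_{σ(h)}`. -/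
def TreeplexData.set {n K : ℕ} (T : TreeplexData n K) : Set (Fin n → ℝ) :=
  {z | (∀ i, 0 ≤ z i) ∧
    ∀ h : Fin K, (∑ i ∈ Finset.univ.filter (fun i => T.owner i = h), z i) = T.parentVal z h}

/-- `q_i = z_i / z_{p_i}`. -/
def TreeplexData.q {n K : ℕ} (T : TreeplexData n K) (z : Fin n → ℝ) (i : Fin n) : ℝ :=
  z i / T.parentVal z (T.owner i)

/-- The dilated entropy `Ψ^dil_α(z) = ∑_i α_{h(i)} z_i ln q_i`. -/
def dilEnt {n K : ℕ} (T : TreeplexData n K) (α : Fin K → ℝ) (z : Fin n → ℝ) : ℝ :=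
  ∑ i, α (T.owner i) * z i * Real.log (T.q z i)

/-- Bregman divergence of the dilated entropy:
`D(u, z) = ∑_i α_{h(i)} u_i ln(q^u_i / q^z_i)`, with `0 ln 0 = 0`. -/
def dilEntBreg {n K : ℕ} (T : TreeplexData n K) (α : Fin K → ℝ) (u z : Fin n → ℝ) : ℝ :=
  ∑ i, α (T.owner i) * u i * Real.log (T.q u i / T.q z i)

/-- Coordinates of a pair `z = (x, y)` indexed by `Fin M ⊕ Fin N`. -/
def coordsOf {M N : ℕ} (z : Pt M N) : Fin M ⊕ Fin N → ℝ := Sum.elim z.1 z.2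

/-!
Each OOMD step satisfies the three-point inequality of a Bregman proximal step. Adding the
inequalities of the two half-steps and bounding the error of the optimistic prediction,
`η⟨z_t - ẑ_{t+1}, F (z_t - z_{t-1})⟩`, by `ηP/2` times squared distances (this is where
`η ≤ 1/(8P)` enters) shows that `Φ_t(w) = D(w, ẑ_t) + ‖ẑ_t - z_{t-1}‖²/8` decreases by at least
`η⟨z_t - w, F z_t⟩ + 5/16 (‖z_t - ẑ_t‖² + ‖ẑ_{t+1} - z_t‖²)`. Telescoping against the average
iterate, for which the game terms cancel by skew-symmetry of `F`, makes the step lengths summable.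
A cluster point `z*` of `ẑ_t` therefore solves the variational inequality `⟨w - z*, F z*⟩ ≥ 0`,
i.e. is a Nash equilibrium. With `w = z*` the game terms are nonnegative, so `Φ_t(z*)` is
nonincreasing; it tends to `0` along the subsequence, hence everywhere, and strong convexity
gives `z_t → z*`.
-/

open Matrix

section Algebra

variable {M N n : ℕ}

lemma dotPt_add_left (a b c : Pt M N) : dotPt (a + b) c = dotPt a c + dotPt b c := by
  simp only [dotPt, dotp, Prod.fst_add, Prod.snd_add, Pi.add_apply, add_mul, sum_add_distrib]
  ring

lemma dotPt_smul_left (r : ℝ) (a c : Pt M N) : dotPt (r • a) c = r * dotPt a c := by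
  simp only [dotPt, dotp, Prod.smul_fst, Prod.smul_snd, Pi.smul_apply, smul_eq_mul, mul_assoc,
    ← mul_sum, mul_add]

lemma dotPt_sub_left (a b c : Pt M N) : dotPt (a - b) c = dotPt a c - dotPt b c := by
  simp only [dotPt, dotp, Prod.fst_sub, Prod.snd_sub, Pi.sub_apply, sub_mul, sum_sub_distrib]
  ring

lemma dotPt_sum_left {ι : Type*} (s : Finset ι) (f : ι → Pt M N) (c : Pt M N) :
    dotPt (∑ k ∈ s, f k) c = ∑ k ∈ s, dotPt (f k) c := by
  induction s using Finset.cons_induction with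
  | empty => simp [dotPt, dotp]
  | cons a s ha ih => rw [sum_cons, sum_cons, dotPt_add_left, ih]

def dotPtCLM (c : Pt M N) : Pt M N →L[ℝ] ℝ :=
  LinearMap.toContinuousLinearMap
    { toFun := fun w => dotPt w c
      map_add' := fun a b => dotPt_add_left a b c
      map_smul' := fun r a => dotPt_smul_left r a c }

@[simp]
lemma dotPtCLM_apply (c w : Pt M N) : dotPtCLM c w = dotPt w c := rfl

lemma dotPt_Fop (G : Matrix (Fin M) (Fin N) ℝ) (a b : Pt M N) :
    dotPt a (Fop G b) = a.1 ⬝ᵥ (G *ᵥ b.2) - b.1 ⬝ᵥ (G *ᵥ a.2) := by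
  simp only [dotPt, Fop]
  change a.1 ⬝ᵥ (G *ᵥ b.2) + a.2 ⬝ᵥ -(Gᵀ *ᵥ b.1) = _
  rw [dotProduct_neg, dotProduct_mulVec a.2, vecMul_transpose, dotProduct_comm (G *ᵥ a.2)]
  ring

lemma dotPt_Fop_self (G : Matrix (Fin M) (Fin N) ℝ) (a : Pt M N) : dotPt a (Fop G a) = 0 := by
  rw [dotPt_Fop, sub_self]

lemma dotPt_Fop_comm (G : Matrix (Fin M) (Fin N) ℝ) (a b : Pt M N) :
    dotPt a (Fop G b) = -dotPt b (Fop G a) := by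
  rw [dotPt_Fop, dotPt_Fop]
  ring

lemma dotPt_sub_Fop_left (G : Matrix (Fin M) (Fin N) ℝ) (u v : Pt M N) :
    dotPt (u - v) (Fop G u) = dotPt (u - v) (Fop G v) := by
  simp only [dotPt_Fop, Prod.fst_sub, Prod.snd_sub, mulVec_sub, dotProduct_sub, sub_dotProduct]
  ring

lemma sum_dotPt_sub_Fop (G : Matrix (Fin M) (Fin N) ℝ) {ι : Type*} (s : Finset ι)
    (x : ι → Pt M N) (c : Pt M N) :
    ∑ k ∈ s, dotPt (x k - c) (Fop G (x k)) = dotPt (∑ k ∈ s, x k) (Fop G c) := by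
  have h : ∀ k, dotPt (x k - c) (Fop G (x k)) = dotPt (x k) (Fop G c) := fun k => by
    rw [dotPt_sub_left, dotPt_Fop_self, dotPt_Fop_comm G c, zero_sub, neg_neg]
  simp only [h, dotPt_sum_left]

lemma sqnorm_nonneg (x : Fin n → ℝ) : 0 ≤ sqnorm x :=
  sum_nonneg fun _ _ => sq_nonneg _

lemma sqnormPt_nonneg (z : Pt M N) : 0 ≤ sqnormPt z :=
  add_nonneg (sqnorm_nonneg _) (sqnorm_nonneg _)

lemma sqnormPt_sub_comm (a b : Pt M N) : sqnormPt (a - b) = sqnormPt (b - a) := by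
  simp only [sqnormPt, sqnorm, Prod.fst_sub, Prod.snd_sub, Pi.sub_apply]
  congr 1 <;> exact sum_congr rfl fun i _ => by ring

lemma sqnorm_add_le (x y : Fin n → ℝ) : sqnorm (x + y) ≤ 2 * sqnorm x + 2 * sqnorm y := by
  simp only [sqnorm, Pi.add_apply, mul_sum, ← sum_add_distrib]
  gcongr with i
  nlinarith [sq_nonneg (x i - y i)]

lemma sqnormPt_add_le (a b : Pt M N) :
    sqnormPt (a + b) ≤ 2 * sqnormPt a + 2 * sqnormPt b := by
  simp only [sqnormPt, Prod.fst_add, Prod.snd_add]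
  linarith [sqnorm_add_le a.1 b.1, sqnorm_add_le a.2 b.2]

lemma sq_norm1_le (x : Fin n → ℝ) : norm1 x ^ 2 ≤ n * sqnorm x := by
  simpa [norm1, sqnorm, sq_abs] using sq_sum_le_card_mul_sum_sq (s := univ) (f := fun i => |x i|)

lemma abs_dotProduct_mulVec_le (G : Matrix (Fin M) (Fin N) ℝ) (hG : ∀ i j, |G i j| ≤ 1)
    (x : Fin M → ℝ) (y : Fin N → ℝ) : |x ⬝ᵥ (G *ᵥ y)| ≤ norm1 x * norm1 y := by
  rw [norm1, norm1, sum_mul_sum]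
  simp only [dotProduct, mulVec, mul_sum]
  refine (abs_sum_le_sum_abs _ _).trans (sum_le_sum fun i _ =>
    (abs_sum_le_sum_abs _ _).trans (sum_le_sum fun j _ => ?_))
  rw [abs_mul, abs_mul, ← mul_assoc, mul_right_comm]
  exact mul_le_of_le_one_right (by positivity) (hG i j)

lemma two_mul_norm1_mul_norm1_le (x : Fin M → ℝ) (y : Fin N → ℝ) :
    2 * (norm1 x * norm1 y) ≤ (M + N) * (sqnorm x + sqnorm y) := by
  nlinarith [sq_nonneg (norm1 x - norm1 y), sq_norm1_le x, sq_norm1_le y, sqnorm_nonneg x,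
    sqnorm_nonneg y, (Nat.cast_nonneg N : (0 : ℝ) ≤ N), (Nat.cast_nonneg M : (0 : ℝ) ≤ M)]

lemma abs_dotPt_Fop_le (G : Matrix (Fin M) (Fin N) ℝ) (hG : ∀ i j, |G i j| ≤ 1) (a b : Pt M N) :
    |dotPt a (Fop G b)| ≤ (M + N) / 2 * (sqnormPt a + sqnormPt b) := by
  have h₁ := abs_dotProduct_mulVec_le G hG a.1 b.2
  have h₂ := abs_dotProduct_mulVec_le G hG b.1 a.2
  have h₃ := two_mul_norm1_mul_norm1_le a.1 b.2
  have h₄ := two_mul_norm1_mul_norm1_le b.1 a.2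
  rw [dotPt_Fop, sqnormPt, sqnormPt]
  calc _ ≤ |a.1 ⬝ᵥ (G *ᵥ b.2)| + |b.1 ⬝ᵥ (G *ᵥ a.2)| := abs_sub _ _
    _ ≤ _ := by linarith

end Algebra

section Topology

variable {M N : ℕ}

lemma norm_le_sqrt_sqnormPt (z : Pt M N) : ‖z‖ ≤ √(sqnormPt z) := by
  have hcoord {k : ℕ} (x : Fin k → ℝ) (r : ℝ) (hr : sqnorm x ≤ r) : ‖x‖ ≤ √r :=
    (pi_norm_le_iff_of_nonneg (Real.sqrt_nonneg r)).2 fun i => by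
      rw [Real.norm_eq_abs, ← Real.sqrt_sq_eq_abs]
      exact Real.sqrt_le_sqrt <| (single_le_sum (fun j _ => sq_nonneg (x j)) (mem_univ i)).trans hr
  exact max_le (hcoord z.1 _ (le_add_of_nonneg_right (sqnorm_nonneg z.2)))
    (hcoord z.2 _ (le_add_of_nonneg_left (sqnorm_nonneg z.1)))

lemma tendsto_of_sqnormPt_sub {α : Type*} {l : Filter α} {f : α → Pt M N} {a : Pt M N}
    (h : Tendsto (fun k => sqnormPt (f k - a)) l (𝓝 0)) : Tendsto f l (𝓝 a) := by
  rw [tendsto_iff_norm_sub_tendsto_zero]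
  refine squeeze_zero (fun _ => norm_nonneg _) (fun _ => norm_le_sqrt_sqnormPt _) ?_
  simpa using h.sqrt

lemma continuous_dotPt : Continuous fun p : Pt M N × Pt M N => dotPt p.1 p.2 := by
  unfold dotPt dotp
  fun_prop

lemma continuous_sqnormPt : Continuous (sqnormPt : Pt M N → ℝ) := by
  unfold sqnormPt sqnorm
  fun_prop

lemma continuous_Fop (G : Matrix (Fin M) (Fin N) ℝ) : Continuous (Fop G) := by
  unfold Fop
  fun_prop

lemma continuousOn_Dbreg {ψ : Pt M N → ℝ} {Z : Set (Pt M N)} (hψ : ContinuousOn ψ Z)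
    (hψ' : ContinuousOn (fderiv ℝ ψ) Z) :
    ContinuousOn (fun p : Pt M N × Pt M N => Dbreg ψ p.1 p.2) (Z ×ˢ Z) := by
  unfold Dbreg
  refine ((hψ.comp continuousOn_fst fun p hp => hp.1).sub
    (hψ.comp continuousOn_snd fun p hp => hp.2)).sub ?_
  exact (hψ'.comp continuousOn_snd fun p hp => hp.2).clm_apply (by fun_prop)

lemma tendsto_Dbreg {α : Type*} {l : Filter α} {ψ : Pt M N → ℝ} {Z : Set (Pt M N)}
    (hψ : ContinuousOn ψ Z) (hψ' : ContinuousOn (fderiv ℝ ψ) Z) {u v : α → Pt M N}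
    {a b : Pt M N} (ha : a ∈ Z) (hb : b ∈ Z) (hu : Tendsto u l (𝓝 a)) (hv : Tendsto v l (𝓝 b))
    (huZ : ∀ᶠ k in l, u k ∈ Z) (hvZ : ∀ᶠ k in l, v k ∈ Z) :
    Tendsto (fun k => Dbreg ψ (u k) (v k)) l (𝓝 (Dbreg ψ a b)) :=
  (continuousOn_Dbreg hψ hψ' (a, b) ⟨ha, hb⟩).tendsto.comp <|
    tendsto_nhdsWithin_iff.2 ⟨hu.prodMk_nhds hv, huZ.and hvZ⟩

end Topology

section Treeplex

lemma setOf_exists_eq_image_prod {α β γ : Type*} (f : α → β → γ) (S : Set α) (T : Set β) :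
    {z | ∃ u ∈ S, ∃ v ∈ T, z = f u v} = (fun p => f p.1 p.2) '' S ×ˢ T := by
  ext z
  constructor
  · rintro ⟨u, hu, v, hv, rfl⟩
    exact ⟨(u, v), ⟨hu, hv⟩, rfl⟩
  · rintro ⟨⟨u, v⟩, ⟨hu, hv⟩, rfl⟩
    exact ⟨u, hu, v, hv, rfl⟩

lemma IsTreeplex.nonneg {n : ℕ} {S : Set (Fin n → ℝ)} (h : IsTreeplex S) :
    ∀ z ∈ S, ∀ i, 0 ≤ z i := by
  induction h with
  | simplex m => exact fun z hz => hz.1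
  | prod _ _ ihS ihT =>
    rintro _ ⟨u, hu, v, hv, rfl⟩ i
    induction i using Fin.addCases <;> simp [ihS u hu, ihT v hv]
  | branch i _ _ ihS ihT =>
    rintro _ ⟨u, hu, v, hv, rfl⟩ j
    induction j using Fin.addCases <;> simp [ihS u hu, mul_nonneg (ihS u hu i) (ihT v hv _)]

lemma IsTreeplex.isCompact {n : ℕ} {S : Set (Fin n → ℝ)} (h : IsTreeplex S) :
    IsCompact S := by
  induction h with
  | simplex m => exact isCompact_stdSimplex ℝ (Fin (m + 1))
  | prod _ _ ihS ihT =>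
    rw [setOf_exists_eq_image_prod]
    exact (ihS.prod ihT).image (by fun_prop)
  | branch i _ _ ihS ihT =>
    rw [setOf_exists_eq_image_prod (fun u (v : Fin _ → ℝ) => Fin.append u fun j => u i * v j)]
    exact (ihS.prod ihT).image (by fun_prop)

lemma smul_append_add_smul_append {m k : ℕ} (a b : ℝ) (u u' : Fin m → ℝ) (v v' : Fin k → ℝ) :
    a • Fin.append u v + b • Fin.append u' v' = Fin.append (a • u + b • u') (a • v + b • v') := by
  funext i
  induction i using Fin.addCases <;> simp

lemma Convex.exists_smul_add_smul_eq {E : Type*} [AddCommGroup E] [Module ℝ E] {T : Set E}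
    (hT : Convex ℝ T) {v v' : E} (hv : v ∈ T) (hv' : v' ∈ T) {p q : ℝ} (hp : 0 ≤ p)
    (hq : 0 ≤ q) : ∃ w ∈ T, p • v + q • v' = (p + q) • w := by
  rcases (add_nonneg hp hq).eq_or_lt with hpq | hpq
  · obtain ⟨rfl, rfl⟩ : p = 0 ∧ q = 0 := ⟨by linarith, by linarith⟩
    exact ⟨v, hv, by simp⟩
  refine ⟨(p / (p + q)) • v + (q / (p + q)) • v', hT hv hv' (by positivity) (by positivity)
    (by field_simp), ?_⟩
  rw [smul_add, smul_smul, smul_smul, mul_div_cancel₀ _ hpq.ne', mul_div_cancel₀ _ hpq.ne']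

lemma IsTreeplex.convex {n : ℕ} {S : Set (Fin n → ℝ)} (h : IsTreeplex S) : Convex ℝ S := by
  induction h with
  | simplex m => exact convex_stdSimplex ℝ (Fin (m + 1))
  | prod _ _ ihS ihT =>
    rintro _ ⟨u, hu, v, hv, rfl⟩ _ ⟨u', hu', v', hv', rfl⟩ a b ha hb hab
    exact ⟨_, ihS hu hu' ha hb hab, _, ihT hv hv' ha hb hab, smul_append_add_smul_append ..⟩
  | branch i hS _ ihS ihT =>
    rintro _ ⟨u, hu, v, hv, rfl⟩ _ ⟨u', hu', v', hv', rfl⟩ a b ha hb hab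
    obtain ⟨w, hw, hw_eq⟩ := ihT.exists_smul_add_smul_eq hv hv'
      (mul_nonneg ha (hS.nonneg u hu i)) (mul_nonneg hb (hS.nonneg u' hu' i))
    refine ⟨a • u + b • u', ihS hu hu' ha hb hab, w, hw, ?_⟩
    rw [smul_append_add_smul_append]
    congr 1
    funext j
    simpa [mul_assoc] using congrFun hw_eq j

end Treeplex

section Bregman

variable {M N : ℕ} {ψ : Pt M N → ℝ}

lemma Dbreg_self (u : Pt M N) : Dbreg ψ u u = 0 := by
  simp [Dbreg]

lemma Dbreg_three_point (u v w : Pt M N) :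
    Dbreg ψ w v - Dbreg ψ w u - Dbreg ψ u v = fderiv ℝ ψ u (w - u) - fderiv ℝ ψ v (w - u) := by
  simp only [Dbreg, map_sub]
  ring

lemma dotPt_sub_le_of_isMinOn_Dbreg {Z : Set (Pt M N)} (hZ : Convex ℝ Z) {η : ℝ}
    {c v p w : Pt M N} (hp : p ∈ Z) (hψ : DifferentiableAt ℝ ψ p)
    (hmin : ∀ w ∈ Z, η * dotPt p c + Dbreg ψ p v ≤ η * dotPt w c + Dbreg ψ w v) (hw : w ∈ Z) :
    η * dotPt (p - w) c ≤ Dbreg ψ w v - Dbreg ψ w p - Dbreg ψ p v := by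
  have hderiv : HasFDerivAt (fun w => η * dotPt w c + Dbreg ψ w v)
      (η • dotPtCLM c + (fderiv ℝ ψ p - fderiv ℝ ψ v)) p := by
    have hlin : HasFDerivAt (fun w => η * dotPt w c) (η • dotPtCLM c) p :=
      ((dotPtCLM c).hasFDerivAt.const_smul η).congr_fderiv rfl
    have hD : (fun w => Dbreg ψ w v) = fun w => ψ w - fderiv ℝ ψ v w + (fderiv ℝ ψ v v - ψ v) := by
      funext w
      simp only [Dbreg, map_sub]
      ring
    exact hlin.add (hD ▸ (hψ.hasFDerivAt.sub (fderiv ℝ ψ v).hasFDerivAt).add_const _)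
  have hfirst := (isMinOn_iff.2 hmin).localize.hasFDerivWithinAt_nonneg hderiv.hasFDerivWithinAt
    (sub_mem_posTangentConeAt_of_segment_subset (hZ.segment_subset hp hw))
  have hsub : dotPt (p - w) c = -dotPt (w - p) c := by
    rw [dotPt_sub_left, dotPt_sub_left, neg_sub]
  simp only [_root_.add_apply, _root_.smul_apply, dotPtCLM_apply, _root_.sub_apply, smul_eq_mul]
    at hfirst
  rw [Dbreg_three_point p v w, hsub]
  linarith

end Bregman

section Nash

variable {M N : ℕ} {G : Matrix (Fin M) (Fin N) ℝ} {X : Set (Fin M → ℝ)} {Y : Set (Fin N → ℝ)}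

lemma saddle_of_forall_dotPt_sub_Fop_nonneg {zs : Pt M N}
    (h : ∀ w ∈ X ×ˢ Y, 0 ≤ dotPt (w - zs) (Fop G zs)) :
    ∀ x ∈ X, ∀ y ∈ Y, dotp zs.1 (G *ᵥ y) ≤ dotp x (G *ᵥ zs.2) := by
  intro x hx y hy
  have hxy := h (x, y) ⟨hx, hy⟩
  simp only [dotPt_Fop, Prod.fst_sub, Prod.snd_sub, mulVec_sub, dotProduct_sub,
    sub_dotProduct] at hxy
  change _ ⬝ᵥ _ ≤ _ ⬝ᵥ _
  linarith

lemma mem_NashSet_of_saddle (hX : IsCompact X) (hY : IsCompact Y) {x : Fin M → ℝ}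
    {y : Fin N → ℝ} (hx : x ∈ X) (hy : y ∈ Y)
    (h : ∀ x' ∈ X, ∀ y' ∈ Y, dotp x (G *ᵥ y') ≤ dotp x' (G *ᵥ y)) :
    (x, y) ∈ NashSet G X Y := by
  refine ⟨⟨hx, fun x' hx' => ?_⟩, ⟨hy, fun y' hy' => ?_⟩⟩
  · calc maxPayoff G Y x ≤ dotp x' (G *ᵥ y) :=
          csSup_le (Set.nonempty_of_mem hy |>.image _) <| by
            rintro _ ⟨y', hy', rfl⟩
            exact h x' hx' y' hy'
      _ ≤ maxPayoff G Y x' :=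
          le_csSup (hY.bddAbove_image (by unfold dotp; fun_prop)) ⟨y, hy, rfl⟩
  · calc minPayoff G X y' ≤ dotp x (G *ᵥ y') :=
          csInf_le (hX.bddBelow_image (by unfold dotp; fun_prop)) ⟨x, hx, rfl⟩
      _ ≤ minPayoff G X y :=
          le_csInf (Set.nonempty_of_mem hx |>.image _) <| by
            rintro _ ⟨x', hx', rfl⟩
            exact h x' hx' y' hy'

end Nash

/-- Lyapunov function of OOMD relative to the comparator `w`. -/
def oomdPotential {M N : ℕ} (ψ : Pt M N → ℝ) (z zh : ℕ → Pt M N) (w : Pt M N) (t : ℕ) : ℝ :=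
  Dbreg ψ w (zh t) + sqnormPt (zh t - z (t - 1)) / 8

def oomdMovement {M N : ℕ} (z zh : ℕ → Pt M N) (t : ℕ) : ℝ :=
  sqnormPt (z t - zh t) + sqnormPt (zh (t + 1) - z t)

lemma mul_dotPt_Fop_le {M N : ℕ} {G : Matrix (Fin M) (Fin N) ℝ} (hG : ∀ i j, |G i j| ≤ 1)
    {η : ℝ} (hη : 0 ≤ η) (hηP : η * (M + N) ≤ 1 / 8) (a b : Pt M N) :
    η * dotPt a (Fop G b) ≤ (sqnormPt a + sqnormPt b) / 16 := by
  have hab := add_nonneg (sqnormPt_nonneg a) (sqnormPt_nonneg b)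
  calc η * dotPt a (Fop G b) ≤ η * ((M + N) / 2 * (sqnormPt a + sqnormPt b)) :=
        mul_le_mul_of_nonneg_left ((le_abs_self _).trans (abs_dotPt_Fop_le G hG a b)) hη
    _ = η * (M + N) * (sqnormPt a + sqnormPt b) / 2 := by ring
    _ ≤ 1 / 8 * (sqnormPt a + sqnormPt b) / 2 := by gcongr
    _ = (sqnormPt a + sqnormPt b) / 16 := by ring

section Limits

variable {M N : ℕ} {z zh : ℕ → Pt M N}

lemma tendsto_z_sub_zh (hsum : Summable fun k => oomdMovement z zh (k + 1)) :
    Tendsto (fun t => z t - zh t) atTop (𝓝 0) := by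
  rw [← tendsto_add_atTop_iff_nat 1]
  refine tendsto_of_sqnormPt_sub <| squeeze_zero (fun _ => sqnormPt_nonneg _) (fun k => ?_)
    hsum.tendsto_atTop_zero
  simpa [oomdMovement] using sqnormPt_nonneg (zh (k + 1 + 1) - z (k + 1))

lemma tendsto_zh_succ_sub_z (hsum : Summable fun k => oomdMovement z zh (k + 1)) :
    Tendsto (fun t => zh (t + 1) - z t) atTop (𝓝 0) := by
  rw [← tendsto_add_atTop_iff_nat 1]
  refine tendsto_of_sqnormPt_sub <| squeeze_zero (fun _ => sqnormPt_nonneg _) (fun k => ?_)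
    hsum.tendsto_atTop_zero
  simpa [oomdMovement] using sqnormPt_nonneg (z (k + 1) - zh (k + 1))

end Limits

namespace IsOOMD

variable {M N : ℕ} {G : Matrix (Fin M) (Fin N) ℝ} {Z : Set (Pt M N)}
  {D : Pt M N → Pt M N → ℝ} {ψ : Pt M N → ℝ} {η : ℝ} {z zh : ℕ → Pt M N}

lemma z_mem (h : IsOOMD G Z D η z zh) {t : ℕ} (ht : 1 ≤ t) : z t ∈ Z :=
  (h.2.2.1 t ht).1

lemma zh_mem (h : IsOOMD G Z D η z zh) {t : ℕ} (ht : 1 ≤ t) : zh t ∈ Z := by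
  obtain ⟨s, rfl⟩ := Nat.exists_eq_add_of_le' ht
  rcases s with _ | s
  · exact h.2.1 ▸ h.1
  · exact (h.2.2.2 (s + 1) (by omega)).1

lemma oomdPotential_one (h : IsOOMD G Z D η z zh) (w : Pt M N) :
    oomdPotential ψ z zh w 1 = Dbreg ψ w (z 0) := by
  simp [oomdPotential, h.2.1, sqnormPt, sqnorm]

lemma z_three_point (h : IsOOMD G Z (Dbreg ψ) η z zh) (hZ : Convex ℝ Z)
    (hψ : ∀ v ∈ Z, DifferentiableAt ℝ ψ v) {t : ℕ} (ht : 1 ≤ t) {w : Pt M N} (hw : w ∈ Z) :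
    η * dotPt (z t - w) (Fop G (z (t - 1))) ≤
      Dbreg ψ w (zh t) - Dbreg ψ w (z t) - Dbreg ψ (z t) (zh t) :=
  dotPt_sub_le_of_isMinOn_Dbreg hZ (h.z_mem ht) (hψ _ (h.z_mem ht)) (h.2.2.1 t ht).2 hw

lemma zh_three_point (h : IsOOMD G Z (Dbreg ψ) η z zh) (hZ : Convex ℝ Z)
    (hψ : ∀ v ∈ Z, DifferentiableAt ℝ ψ v) {t : ℕ} (ht : 1 ≤ t) {w : Pt M N} (hw : w ∈ Z) :
    η * dotPt (zh (t + 1) - w) (Fop G (z t)) ≤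
      Dbreg ψ w (zh t) - Dbreg ψ w (zh (t + 1)) - Dbreg ψ (zh (t + 1)) (zh t) :=
  dotPt_sub_le_of_isMinOn_Dbreg hZ (h.zh_mem (by omega)) (hψ _ (h.zh_mem (by omega)))
    (h.2.2.2 t ht).2 hw

lemma potential_succ_le (h : IsOOMD G Z (Dbreg ψ) η z zh) (hG : ∀ i j, |G i j| ≤ 1)
    (hZ : Convex ℝ Z) (hψ : ∀ v ∈ Z, DifferentiableAt ℝ ψ v)
    (hsc : ∀ u ∈ Z, ∀ v ∈ Z, (1 / 2) * sqnormPt (u - v) ≤ Dbreg ψ u v)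
    (hη : 0 ≤ η) (hηP : η * (M + N) ≤ 1 / 8) {t : ℕ} (ht : 1 ≤ t) {w : Pt M N} (hw : w ∈ Z) :
    η * dotPt (z t - w) (Fop G (z t)) + 5 / 16 * oomdMovement z zh t
      + oomdPotential ψ z zh w (t + 1) ≤ oomdPotential ψ z zh w t := by
  have hz := h.z_mem ht
  have hzh := h.zh_mem ht
  have hzh' := h.zh_mem (t := t + 1) (by omega)
  have h₁ := h.z_three_point hZ hψ ht hzh'
  have h₂ := h.zh_three_point hZ hψ ht hw
  -- `F z_t = F z_{t-1} + F (z_t - z_{t-1})`: the last term is the optimistic prediction error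
  have hsplit : dotPt (z t - w) (Fop G (z t)) =
      dotPt (z t - zh (t + 1)) (Fop G (z (t - 1))) + dotPt (zh (t + 1) - w) (Fop G (z t))
        + dotPt (z t - zh (t + 1)) (Fop G (z t - z (t - 1))) := by
    simp only [dotPt_Fop, Prod.fst_sub, Prod.snd_sub, mulVec_sub, dotProduct_sub, sub_dotProduct]
    ring
  have herr := mul_dotPt_Fop_le hG hη hηP (z t - zh (t + 1)) (z t - z (t - 1))
  have htri := sqnormPt_add_le (z t - zh t) (zh t - z (t - 1))
  rw [sub_add_sub_cancel] at htri
  rw [sqnormPt_sub_comm (z t) (zh (t + 1))] at herr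
  have hsc₁ := hsc _ hzh' _ hz
  have hsc₂ := hsc _ hz _ hzh
  simp only [oomdPotential, oomdMovement, Nat.add_sub_cancel]
  rw [hsplit, mul_add, mul_add]
  linarith [sqnormPt_nonneg (z t - zh t)]

lemma oomdPotential_nonneg (hsc : ∀ u ∈ Z, ∀ v ∈ Z, (1 / 2) * sqnormPt (u - v) ≤ Dbreg ψ u v)
    {w : Pt M N} (hw : w ∈ Z) {t : ℕ} (ht : zh t ∈ Z) : 0 ≤ oomdPotential ψ z zh w t :=
  add_nonneg ((mul_nonneg (by norm_num) (sqnormPt_nonneg _)).trans (hsc w hw _ ht))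
    (div_nonneg (sqnormPt_nonneg _) (by norm_num))

lemma sum_add_potential_le (h : IsOOMD G Z (Dbreg ψ) η z zh) (hG : ∀ i j, |G i j| ≤ 1)
    (hZ : Convex ℝ Z) (hψ : ∀ v ∈ Z, DifferentiableAt ℝ ψ v)
    (hsc : ∀ u ∈ Z, ∀ v ∈ Z, (1 / 2) * sqnormPt (u - v) ≤ Dbreg ψ u v)
    (hη : 0 ≤ η) (hηP : η * (M + N) ≤ 1 / 8) {w : Pt M N} (hw : w ∈ Z) (T : ℕ) :
    ∑ k ∈ range T, (η * dotPt (z (k + 1) - w) (Fop G (z (k + 1)))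
        + 5 / 16 * oomdMovement z zh (k + 1)) + oomdPotential ψ z zh w (T + 1)
      ≤ Dbreg ψ w (z 0) := by
  induction T with
  | zero => simp [h.oomdPotential_one]
  | succ T ih =>
    rw [sum_range_succ]
    linarith [h.potential_succ_le hG hZ hψ hsc hη hηP (t := T + 1) (by omega) hw]

lemma summable_movement (h : IsOOMD G Z (Dbreg ψ) η z zh) (hG : ∀ i j, |G i j| ≤ 1)
    (hZ : Convex ℝ Z) (hZc : IsCompact Z) (hψ : ∀ v ∈ Z, DifferentiableAt ℝ ψ v)
    (hψ' : ContinuousOn (fderiv ℝ ψ) Z)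
    (hsc : ∀ u ∈ Z, ∀ v ∈ Z, (1 / 2) * sqnormPt (u - v) ≤ Dbreg ψ u v)
    (hη : 0 ≤ η) (hηP : η * (M + N) ≤ 1 / 8) :
    Summable fun k => oomdMovement z zh (k + 1) := by
  have hψc : ContinuousOn ψ Z := fun v hv => (hψ v hv).continuousAt.continuousWithinAt
  obtain ⟨C, hC⟩ := (hZc.prod hZc).bddAbove_image (continuousOn_Dbreg hψc hψ')
  have hDC : ∀ w ∈ Z, Dbreg ψ w (z 0) ≤ C := fun w hw => hC ⟨(w, z 0), ⟨hw, h.1⟩, rfl⟩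
  refine summable_of_sum_range_le (c := 16 / 5 * C)
    (fun k => add_nonneg (sqnormPt_nonneg _) (sqnormPt_nonneg _)) fun T => ?_
  rcases T.eq_zero_or_pos with rfl | hT
  · simpa [Dbreg_self] using hDC _ h.1
  -- comparing with the average iterate cancels the game terms, by skew-symmetry of `F`
  set zb : Pt M N := ∑ k ∈ range T, (T : ℝ)⁻¹ • z (k + 1)
  have hzb : zb ∈ Z := hZ.sum_mem (fun _ _ => by positivity)
    (by simp [hT.ne']) fun k _ => h.z_mem (by omega)
  have hsum : ∑ k ∈ range T, z (k + 1) = (T : ℝ) • zb := by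
    have hT' : (T : ℝ) ≠ 0 := Nat.cast_ne_zero.2 hT.ne'
    simp only [zb, smul_sum, smul_smul, mul_inv_cancel₀ hT', one_smul]
  have hcancel : ∑ k ∈ range T, dotPt (z (k + 1) - zb) (Fop G (z (k + 1))) = 0 := by
    rw [sum_dotPt_sub_Fop, hsum, dotPt_smul_left, dotPt_Fop_self, mul_zero]
  have hle := h.sum_add_potential_le hG hZ hψ hsc hη hηP hzb T
  rw [sum_add_distrib, ← mul_sum, ← mul_sum, hcancel, mul_zero, zero_add] at hle
  linarith [oomdPotential_nonneg (z := z) hsc hzb (h.zh_mem (t := T + 1) (by omega)), hDC zb hzb]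

lemma forall_dotPt_sub_Fop_nonneg_of_tendsto (h : IsOOMD G Z (Dbreg ψ) η z zh)
    (hZ : Convex ℝ Z) (hψ : ∀ v ∈ Z, DifferentiableAt ℝ ψ v)
    (hψ' : ContinuousOn (fderiv ℝ ψ) Z) (hη : 0 < η) {zs : Pt M N} (hzs : zs ∈ Z)
    {φ : ℕ → ℕ} (hφ : Tendsto φ atTop atTop)
    (hlim : Tendsto (fun k => zh (φ k + 1)) atTop (𝓝 zs))
    (hz_zh : Tendsto (fun t => z t - zh t) atTop (𝓝 0))
    (hzh_z : Tendsto (fun t => zh (t + 1) - z t) atTop (𝓝 0)) :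
    ∀ w ∈ Z, 0 ≤ dotPt (w - zs) (Fop G zs) := by
  intro w hw
  have hψc : ContinuousOn ψ Z := fun v hv => (hψ v hv).continuousAt.continuousWithinAt
  have hz₁ : Tendsto (fun k => z (φ k + 1)) atTop (𝓝 zs) := by
    simpa using (hz_zh.comp ((tendsto_add_atTop_nat 1).comp hφ)).add hlim
  have hz₀ : Tendsto (fun k => z (φ k)) atTop (𝓝 zs) := by
    simpa using hlim.sub (hzh_z.comp hφ)
  have hzZ : ∀ᶠ k in atTop, z (φ k + 1) ∈ Z := .of_forall fun k => h.z_mem (by omega)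
  have hzhZ : ∀ᶠ k in atTop, zh (φ k + 1) ∈ Z := .of_forall fun k => h.zh_mem (by omega)
  have hlhs : Tendsto (fun k => η * dotPt (z (φ k + 1) - w) (Fop G (z (φ k)))) atTop
      (𝓝 (η * dotPt (zs - w) (Fop G zs))) :=
    ((continuous_dotPt.tendsto _).comp ((hz₁.sub_const w).prodMk_nhds
      (((continuous_Fop G).tendsto zs).comp hz₀))).const_mul η
  have hrhs : Tendsto (fun k => Dbreg ψ w (zh (φ k + 1)) - Dbreg ψ w (z (φ k + 1))
      - Dbreg ψ (z (φ k + 1)) (zh (φ k + 1))) atTop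
      (𝓝 (Dbreg ψ w zs - Dbreg ψ w zs - Dbreg ψ zs zs)) :=
    ((tendsto_Dbreg hψc hψ' hw hzs tendsto_const_nhds hlim (.of_forall fun _ => hw) hzhZ).sub
      (tendsto_Dbreg hψc hψ' hw hzs tendsto_const_nhds hz₁ (.of_forall fun _ => hw) hzZ)).sub
      (tendsto_Dbreg hψc hψ' hzs hzs hz₁ hlim hzZ hzhZ)
  have hle := le_of_tendsto_of_tendsto' hlhs hrhs fun k => by
    simpa using h.z_three_point hZ hψ (t := φ k + 1) (by omega) hw
  rw [sub_self, Dbreg_self, sub_zero] at hle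
  rw [dotPt_sub_left] at hle ⊢
  linarith [nonpos_of_mul_nonpos_right hle hη]

lemma tendsto_of_forall_dotPt_sub_Fop_nonneg (h : IsOOMD G Z (Dbreg ψ) η z zh)
    (hG : ∀ i j, |G i j| ≤ 1) (hZ : Convex ℝ Z) (hψ : ∀ v ∈ Z, DifferentiableAt ℝ ψ v)
    (hψ' : ContinuousOn (fderiv ℝ ψ) Z)
    (hsc : ∀ u ∈ Z, ∀ v ∈ Z, (1 / 2) * sqnormPt (u - v) ≤ Dbreg ψ u v)
    (hη : 0 ≤ η) (hηP : η * (M + N) ≤ 1 / 8) {zs : Pt M N} (hzs : zs ∈ Z)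
    (hVI : ∀ w ∈ Z, 0 ≤ dotPt (w - zs) (Fop G zs)) {φ : ℕ → ℕ} (hφ : Tendsto φ atTop atTop)
    (hlim : Tendsto (fun k => zh (φ k + 1)) atTop (𝓝 zs))
    (hz_zh : Tendsto (fun t => z t - zh t) atTop (𝓝 0))
    (hzh_z : Tendsto (fun t => zh (t + 1) - z t) atTop (𝓝 0)) :
    Tendsto z atTop (𝓝 zs) := by
  have hψc : ContinuousOn ψ Z := fun v hv => (hψ v hv).continuousAt.continuousWithinAt
  set S : ℕ → ℝ := fun n => oomdPotential ψ z zh zs (n + 1)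
  have hS_nonneg : ∀ n, 0 ≤ S n := fun n => oomdPotential_nonneg hsc hzs (h.zh_mem (by omega))
  have hS_anti : Antitone S := antitone_nat_of_succ_le fun n => by
    have hstep := h.potential_succ_le hG hZ hψ hsc hη hηP (t := n + 1) (by omega) hzs
    have hgame : 0 ≤ η * dotPt (z (n + 1) - zs) (Fop G (z (n + 1))) := by
      rw [dotPt_sub_Fop_left]
      exact mul_nonneg hη (hVI _ (h.z_mem (by omega)))
    have hmove : 0 ≤ oomdMovement z zh (n + 1) := add_nonneg (sqnormPt_nonneg _) (sqnormPt_nonneg _)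
    linarith
  have hSφ : Tendsto (fun k => S (φ k)) atTop (𝓝 0) := by
    have hD := tendsto_Dbreg hψc hψ' hzs hzs tendsto_const_nhds hlim (.of_forall fun _ => hzs)
      (.of_forall fun k => h.zh_mem (t := φ k + 1) (by omega))
    have hsq := (continuous_sqnormPt.tendsto 0).comp (hzh_z.comp hφ)
    simpa [S, oomdPotential, Dbreg_self, sqnormPt, sqnorm] using hD.add (hsq.div_const 8)
  have hS : Tendsto S atTop (𝓝 0) := by
    have hinf := tendsto_atTop_ciInf hS_anti ⟨0, Set.forall_mem_range.2 hS_nonneg⟩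
    rwa [tendsto_nhds_unique (hinf.comp hφ) hSφ] at hinf
  have hzh : Tendsto (fun n => zh (n + 1)) atTop (𝓝 zs) := by
    refine tendsto_of_sqnormPt_sub <| squeeze_zero (fun _ => sqnormPt_nonneg _) (fun n => ?_)
      (by simpa using hS.const_mul 2)
    have := hsc zs hzs _ (h.zh_mem (t := n + 1) (by omega))
    rw [sqnormPt_sub_comm] at this
    simp only [S, oomdPotential]
    linarith [sqnormPt_nonneg (zh (n + 1) - z (n + 1 - 1))]
  rw [← tendsto_add_atTop_iff_nat 1]
  simpa using ((hz_zh.comp (tendsto_add_atTop_nat 1)).add hzh)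

end IsOOMD

/-- Theorem 4: for OOMD with a regularizer that is 1-strongly convex
w.r.t. the 2-norm and continuously differentiable on the entire domain `Z = X × Y`,
with `η ≤ 1/(8P)`, the iterates `z_t` converge to a Nash equilibrium. -/
theorem oomd_last_iterate_convergence {M N : ℕ}
    (G : Matrix (Fin M) (Fin N) ℝ) (hG : ∀ i j, |G i j| ≤ 1)
    (X : Set (Fin M → ℝ)) (Y : Set (Fin N → ℝ))
    (hX : IsTreeplex X) (hY : IsTreeplex Y)
    (ψ : Pt M N → ℝ)
    (hdiff : ∀ v ∈ X ×ˢ Y, DifferentiableAt ℝ ψ v)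
    (hcont : ContinuousOn (fun v => fderiv ℝ ψ v) (X ×ˢ Y))
    (hsc : ∀ u ∈ X ×ˢ Y, ∀ v ∈ X ×ˢ Y, (1 / 2) * sqnormPt (u - v) ≤ Dbreg ψ u v)
    (η : ℝ) (hη : 0 < η) (hηP : η ≤ 1 / (8 * ((M : ℝ) + N)))
    (z zh : ℕ → Pt M N) (hoomd : IsOOMD G (X ×ˢ Y) (Dbreg ψ) η z zh) :
    ∃ zinf ∈ NashSet G X Y, Tendsto z atTop (𝓝 zinf) := by
  have hZ : Convex ℝ (X ×ˢ Y) := hX.convex.prod hY.convex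
  have hZc : IsCompact (X ×ˢ Y) := hX.isCompact.prod hY.isCompact
  have hηP' : η * (M + N) ≤ 1 / 8 := by
    rcases (by positivity : (0 : ℝ) ≤ M + N).eq_or_lt with hP | hP
    · rw [← hP, mul_zero]
      norm_num
    · have h8 := (le_div_iff₀ (by positivity)).1 hηP
      linarith [show η * (8 * (M + N)) = 8 * (η * (M + N)) by ring]
  have hsum := hoomd.summable_movement hG hZ hZc hdiff hcont hsc hη.le hηP'
  have hz_zh := tendsto_z_sub_zh hsum
  have hzh_z := tendsto_zh_succ_sub_z hsum
  obtain ⟨zs, hzs, φ, hφ, hlim⟩ :=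
    hZc.tendsto_subseq fun k => hoomd.zh_mem (t := k + 1) (by omega)
  have hVI := hoomd.forall_dotPt_sub_Fop_nonneg_of_tendsto hZ hdiff hcont hη hzs
    hφ.tendsto_atTop hlim hz_zh hzh_z
  refine ⟨zs, ?_, hoomd.tendsto_of_forall_dotPt_sub_Fop_nonneg hG hZ hdiff hcont hsc hη.le hηP'
    hzs hVI hφ.tendsto_atTop hlim hz_zh hzh_z⟩
  exact mem_NashSet_of_saddle hX.isCompact hY.isCompact hzs.1 hzs.2
    (saddle_of_forall_dotPt_sub_Fop_nonneg hVI)
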